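/- arXiv:2503.01796 — 2 statements merged into one kernel-verified Lean document; each statement's English description precedes it below -/
import Mathlib

section
/- Let (R, m) be the perfection of a noetherian local F_p-algebra (R₀, m₀). If M₀ is an R₀[φ]-module that is non-nilpotent and simple, then its perfection M₀^perf is a nonzero simple R[φ]-module. -/
/-- An `R[φ]`-module structure on an `R`-module `M` over an `𝔽_p`-algebra `R`:
an additive map `φ : M → M` satisfying `φ (a • m) = a ^ p • φ m`. -/
structure FrobMod (p : ℕ) (R : Type) [CommRing R] (M : Type) [AddCommGroup M] [Module R M] where
  φ : M →+ M
  semilinear : ∀ (a : R) (m : M), φ (a • m) = a ^ p • φ m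

namespace FrobMod

variable {p : ℕ} {R : Type} [CommRing R] {M : Type} [AddCommGroup M] [Module R M]

/-- An `R[φ]`-module is nilpotent if some power of `φ` is zero. -/
def IsNilpotentMod (F : FrobMod p R M) : Prop :=
  ∃ e : ℕ, ∀ m : M, F.φ^[e] m = 0

/-- A submodule is an `R[φ]`-submodule if it is stable under `φ`. -/
def IsStable (F : FrobMod p R M) (N : Submodule R M) : Prop :=
  ∀ m ∈ N, F.φ m ∈ N

/-- An `R[φ]`-module is simple if it is nonzero and has no nontrivial `φ`-stable submodules. -/
def IsSimpleMod (F : FrobMod p R M) : Prop :=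
  (∃ m : M, m ≠ 0) ∧ ∀ N : Submodule R M, F.IsStable N → N = ⊥ ∨ N = ⊤

/-- An `R[φ]`-module has finite length if there is a uniform bound on the lengths of
strictly increasing chains of `φ`-stable submodules. -/
def HasFiniteLength (F : FrobMod p R M) : Prop :=
  ∃ n : ℕ, ∀ (m : ℕ) (c : Fin m → Submodule R M),
    (∀ i, F.IsStable (c i)) → StrictMono c → m ≤ n

end FrobMod

/-- `g : R₀ →+* R` exhibits `R` as the (direct limit) perfection of `R₀`:
`R` is perfect, every element of `R` has a `p`-power landing in the image of `R₀`, and the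
kernel of `g` consists exactly of the nilpotent elements. -/
structure IsRingPerfection (p : ℕ) {R₀ R : Type} [CommRing R₀] [CommRing R]
    (g : R₀ →+* R) : Prop where
  perfect : Function.Bijective fun x : R => x ^ p
  colim : ∀ x : R, ∃ (n : ℕ) (y : R₀), x ^ p ^ n = g y
  ker : ∀ y : R₀, g y = 0 ↔ ∃ n : ℕ, y ^ p ^ n = 0

/-- `ι : M →ₗ[R] P` exhibits `(P, F)` as the Frobenius perfection
`colim (M → φ_*M → φ_*²M → ⋯)` of the `R[φ]`-module `(M, F₀)`, within `R[φ]`-modules. -/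
structure IsFrobPerfection (p : ℕ) {R : Type} [CommRing R] {M P : Type}
    [AddCommGroup M] [Module R M] [AddCommGroup P] [Module R P]
    (F₀ : FrobMod p R M) (F : FrobMod p R P) (ι : M →ₗ[R] P) : Prop where
  bijective : Function.Bijective F.φ
  comm : ∀ m, ι (F₀.φ m) = F.φ (ι m)
  surj : ∀ x : P, ∃ (e : ℕ) (m : M), F.φ^[e] x = ι m
  ker : ∀ m, ι m = 0 ↔ ∃ e : ℕ, F₀.φ^[e] m = 0

/-- `ι : M₀ →+ P` exhibits `(P, F)`, an `R[φ]`-module over the perfection `g : R₀ →+* R`,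
as the Frobenius perfection `M₀^perf = colim φ_*^e M₀` of the `R₀[φ]`-module `(M₀, F₀)`. -/
structure IsModPerfection (p : ℕ) {R₀ R : Type} [CommRing R₀] [CommRing R] (g : R₀ →+* R)
    {M₀ : Type} [AddCommGroup M₀] [Module R₀ M₀] (F₀ : FrobMod p R₀ M₀)
    {P : Type} [AddCommGroup P] [Module R P] (F : FrobMod p R P)
    (ι : M₀ →+ P) : Prop where
  bijective : Function.Bijective F.φ
  semilinear : ∀ (a : R₀) (m : M₀), ι (a • m) = g a • ι m
  comm : ∀ m, ι (F₀.φ m) = F.φ (ι m)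
  surj : ∀ x : P, ∃ (e : ℕ) (m : M₀), F.φ^[e] x = ι m
  ker : ∀ m, ι m = 0 ↔ ∃ e : ℕ, F₀.φ^[e] m = 0

/-!
Simplicity of `F₀` forces `φ₀` to be injective (its kernel is `φ₀`-stable and cannot be
everything), hence `ι : M₀ → M₀^perf` is injective. The pullback `N₀` to `M₀` of a stable
submodule `N` of `M₀^perf` is stable, hence `0` or `M₀`. If `N₀ = 0` then
`N = 0`, since every element has a Frobenius iterate in the image of `ι`. If `N₀ = M₀`, then
`φ(N)` is again a stable submodule (the Frobenius of `R` is surjective) whose pullback contains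
`φ₀(M₀) ≠ 0`, so it also contains `ι(M₀)`; iterating, `ι(M₀) ⊆ φ^e(N)` for all `e`, and the
injectivity of `φ` gives `N = M₀^perf`, as every element has an iterate in `ι(M₀)`.
-/

namespace FrobMod

variable {p : ℕ} {R : Type} [CommRing R] {M : Type} [AddCommGroup M] [Module R M]
  (F : FrobMod p R M)

def kerSubmodule : Submodule R M where
  carrier := {m | F.φ m = 0}
  add_mem' {a b} (ha : F.φ a = 0) (hb : F.φ b = 0) := by
    rw [Set.mem_ofPred_eq, map_add, ha, hb, add_zero]
  zero_mem' := map_zero F.φ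
  smul_mem' a m (hm : F.φ m = 0) := by
    rw [Set.mem_ofPred_eq, F.semilinear, hm, smul_zero]

theorem mem_kerSubmodule {m : M} : m ∈ F.kerSubmodule ↔ F.φ m = 0 := Iff.rfl

theorem isStable_kerSubmodule : F.IsStable F.kerSubmodule := fun m hm => by
  rw [mem_kerSubmodule] at hm ⊢
  rw [hm, map_zero]

theorem injective_φ_of_isSimpleMod (hs : F.IsSimpleMod) (hn : ¬F.IsNilpotentMod) :
    Function.Injective F.φ := by
  rcases hs.2 _ F.isStable_kerSubmodule with hbot | htop
  · refine (injective_iff_map_eq_zero F.φ).2 fun m hm => ?_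
    rwa [← mem_kerSubmodule, hbot, Submodule.mem_bot] at hm
  · exact absurd ⟨1, fun m => (F.mem_kerSubmodule).1 (htop ▸ Submodule.mem_top)⟩ hn

variable {F}

theorem IsStable.iterate_mem {N : Submodule R M} (hN : F.IsStable N) (e : ℕ) {m : M}
    (hm : m ∈ N) : F.φ^[e] m ∈ N :=
  Set.MapsTo.iterate (fun m hm => hN m hm) e hm

variable (F)

def mapSubmodule (hR : Function.Surjective fun a : R => a ^ p) (N : Submodule R M) :
    Submodule R M where
  carrier := F.φ '' N
  add_mem' := by
    rintro _ _ ⟨u, hu, rfl⟩ ⟨v, hv, rfl⟩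
    exact ⟨u + v, N.add_mem hu hv, map_add F.φ u v⟩
  zero_mem' := ⟨0, N.zero_mem, map_zero F.φ⟩
  smul_mem' a := by
    rintro _ ⟨u, hu, rfl⟩
    obtain ⟨b, rfl⟩ := hR a
    exact ⟨b • u, N.smul_mem b hu, F.semilinear b u⟩

variable {F}

theorem IsStable.mapSubmodule {N : Submodule R M} (hN : F.IsStable N)
    (hR : Function.Surjective fun a : R => a ^ p) : F.IsStable (F.mapSubmodule hR N) := by
  rintro _ ⟨u, hu, rfl⟩
  exact ⟨F.φ u, hN u hu, rfl⟩

end FrobMod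

namespace IsModPerfection

variable {p : ℕ} {R₀ R : Type} [CommRing R₀] [CommRing R] {g : R₀ →+* R}
  {M₀ : Type} [AddCommGroup M₀] [Module R₀ M₀] {F₀ : FrobMod p R₀ M₀}
  {P : Type} [AddCommGroup P] [Module R P] {F : FrobMod p R P} {ι : M₀ →+ P}

theorem injective (h : IsModPerfection p g F₀ F ι) (hφ₀ : Function.Injective F₀.φ) :
    Function.Injective ι := by
  refine (injective_iff_map_eq_zero ι).2 fun m hm => ?_
  obtain ⟨e, he⟩ := (h.ker m).1 hm
  exact hφ₀.iterate e (he.trans (iterate_map_zero F₀.φ e).symm)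

variable (h : IsModPerfection p g F₀ F ι)

def toSemilinearMap : M₀ →ₛₗ[g] P where
  toFun := ι
  map_add' := ι.map_add
  map_smul' := h.semilinear

theorem mem_comap_toSemilinearMap {N : Submodule R P} {m : M₀} :
    m ∈ N.comap h.toSemilinearMap ↔ ι m ∈ N := Iff.rfl

theorem isStable_comap {N : Submodule R P} (hN : F.IsStable N) :
    F₀.IsStable (N.comap h.toSemilinearMap) := fun m (hm : ι m ∈ N) => by
  rw [h.mem_comap_toSemilinearMap, h.comm]
  exact hN _ hm

theorem eq_bot_of_comap_eq_bot {N : Submodule R P} (hN : F.IsStable N)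
    (hbot : N.comap h.toSemilinearMap = ⊥) : N = ⊥ := by
  refine eq_bot_iff.2 fun x hx => ?_
  obtain ⟨e, m, hem⟩ := h.surj x
  have hm : m ∈ N.comap h.toSemilinearMap := by
    rw [h.mem_comap_toSemilinearMap, ← hem]
    exact hN.iterate_mem e hx
  rw [hbot, Submodule.mem_bot] at hm
  subst hm
  rw [Submodule.mem_bot]
  exact h.bijective.1.iterate e (hem.trans ((map_zero ι).trans (iterate_map_zero F.φ e).symm))

theorem comap_mapSubmodule_eq_top (hR : Function.Surjective fun a : R => a ^ p)
    (hs : F₀.IsSimpleMod) (hφ₀ : Function.Injective F₀.φ) {N : Submodule R P}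
    (hN : F.IsStable N)
    (htop : N.comap h.toSemilinearMap = ⊤) :
    (F.mapSubmodule hR N).comap h.toSemilinearMap = ⊤ := by
  obtain ⟨⟨m₀, hm₀⟩, hsub⟩ := hs
  refine (hsub _ (h.isStable_comap (hN.mapSubmodule hR))).resolve_left fun hbot => hm₀ ?_
  have hφm₀ : F₀.φ m₀ ∈ (F.mapSubmodule hR N).comap h.toSemilinearMap := by
    rw [h.mem_comap_toSemilinearMap, h.comm]
    exact ⟨ι m₀, (h.mem_comap_toSemilinearMap).1 (htop ▸ Submodule.mem_top), rfl⟩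
  rw [hbot, Submodule.mem_bot] at hφm₀
  exact hφ₀ (hφm₀.trans (map_zero F₀.φ).symm)

theorem exists_mem_iterate_eq (hR : Function.Surjective fun a : R => a ^ p)
    (hs : F₀.IsSimpleMod) (hφ₀ : Function.Injective F₀.φ) {N : Submodule R P}
    (hN : F.IsStable N)
    (htop : N.comap h.toSemilinearMap = ⊤) (e : ℕ) (m : M₀) :
    ∃ u ∈ N, F.φ^[e] u = ι m := by
  induction e generalizing N with
  | zero => exact ⟨ι m, (h.mem_comap_toSemilinearMap).1 (htop ▸ Submodule.mem_top), rfl⟩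
  | succ e ih =>
    obtain ⟨_, ⟨u, hu, rfl⟩, hum⟩ :=
      ih (hN.mapSubmodule hR) (h.comap_mapSubmodule_eq_top hR hs hφ₀ hN htop)
    exact ⟨u, hu, by rwa [Function.iterate_succ_apply]⟩

theorem eq_top_of_comap_eq_top (hR : Function.Surjective fun a : R => a ^ p)
    (hs : F₀.IsSimpleMod) (hφ₀ : Function.Injective F₀.φ) {N : Submodule R P}
    (hN : F.IsStable N)
    (htop : N.comap h.toSemilinearMap = ⊤) : N = ⊤ := by
  refine eq_top_iff.2 fun x _ => ?_
  obtain ⟨e, m, hem⟩ := h.surj x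
  obtain ⟨u, hu, hum⟩ := h.exists_mem_iterate_eq hR hs hφ₀ hN htop e m
  rwa [h.bijective.1.iterate e (hum.trans hem.symm)] at hu

end IsModPerfection

theorem frobPerfection_of_simple_nonNilpotent_isSimple_general
    {p : ℕ} {R₀ R : Type} [CommRing R₀] [CommRing R]
    (g : R₀ →+* R) (hg : IsRingPerfection p g)
    {M₀ : Type} [AddCommGroup M₀] [Module R₀ M₀] (F₀ : FrobMod p R₀ M₀)
    (hnil : ¬ F₀.IsNilpotentMod) (hsimple : F₀.IsSimpleMod)
    {P : Type} [AddCommGroup P] [Module R P] (F : FrobMod p R P) (ι : M₀ →+ P)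
    (hperf : IsModPerfection p g F₀ F ι) :
    F.IsSimpleMod := by
  have hφ₀ := F₀.injective_φ_of_isSimpleMod hsimple hnil
  obtain ⟨m₀, hm₀⟩ := hsimple.1
  refine ⟨⟨ι m₀, (map_ne_zero_iff ι (hperf.injective hφ₀)).2 hm₀⟩, fun N hN => ?_⟩
  rcases hsimple.2 _ (hperf.isStable_comap hN) with hbot | htop
  · exact Or.inl (hperf.eq_bot_of_comap_eq_bot hN hbot)
  · exact Or.inr (hperf.eq_top_of_comap_eq_top hg.perfect.2 hsimple hφ₀ hN htop)

/-- Let `(R, m)` be the perfection of a noetherian local `𝔽_p`-algebra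
`(R₀, m₀)`. If `M₀` is a non-nilpotent simple `R₀[φ]`-module, then its Frobenius perfection
`M₀^perf` is a nonzero simple `R[φ]`-module. -/
theorem frobPerfection_of_simple_nonNilpotent_isSimple
    {p : ℕ} [Fact p.Prime] {R₀ R : Type} [CommRing R₀] [CommRing R]
    [CharP R₀ p] [CharP R p] [IsNoetherianRing R₀] [IsLocalRing R₀]
    (g : R₀ →+* R) (hg : IsRingPerfection p g)
    {M₀ : Type} [AddCommGroup M₀] [Module R₀ M₀] (F₀ : FrobMod p R₀ M₀)
    (hnil : ¬ F₀.IsNilpotentMod) (hsimple : F₀.IsSimpleMod)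
    {P : Type} [AddCommGroup P] [Module R P] (F : FrobMod p R P) (ι : M₀ →+ P)
    (hperf : IsModPerfection p g F₀ F ι) :
    F.IsSimpleMod :=
  frobPerfection_of_simple_nonNilpotent_isSimple_general g hg F₀ hnil hsimple F ι hperf
end

section
/- Let (R, m) be the perfection of a noetherian local F_p-algebra, with d = dim R > 0. Suppose H^d_m(R) is a simple R[φ]-module and Ann_R(H^d_m(R)) = (0). Then there is no nonzero element x ∈ H^d_m(R) with φ(x) = x. -/
open IsLocalRing

namespace FrobMod

variable {p : ℕ} {R : Type} [CommRing R] {M : Type} [AddCommGroup M] [Module R M]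

theorem isStable_span_singleton_of_fixed (F : FrobMod p R M) {x : M} (hx : F.φ x = x) :
    F.IsStable (R ∙ x) := by
  intro m hm
  obtain ⟨a, rfl⟩ := Submodule.mem_span_singleton.mp hm
  rw [F.semilinear, hx]
  exact Submodule.smul_mem _ _ (Submodule.mem_span_singleton_self x)

theorem IsSimpleMod.span_singleton_eq_top_of_fixed {F : FrobMod p R M} (hF : F.IsSimpleMod)
    {x : M} (hx0 : x ≠ 0) (hx : F.φ x = x) : R ∙ x = ⊤ :=
  (hF.2 _ (F.isStable_span_singleton_of_fixed hx)).resolve_left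
    (by rwa [Submodule.span_singleton_eq_bot])

end FrobMod

theorem smul_eq_zero_of_span_singleton_eq_top {R M : Type*} [CommRing R] [AddCommGroup M]
    [Module R M] {x : M} (hx : R ∙ x = ⊤) {r : R} (hr : r • x = 0) (y : M) : r • y = 0 := by
  have : r ∈ Module.annihilator R M := by
    rwa [← Submodule.annihilator_top, ← hx, Submodule.mem_annihilator_span_singleton]
  exact Module.mem_annihilator.mp this y

theorem le_nilradical_of_le_radical_span {R : Type*} [CommRing R] {s : Set R} {I : Ideal R}
    (hs : ∀ r ∈ s, IsNilpotent r) (hI : I ≤ (Ideal.span s).radical) : I ≤ nilradical R :=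
  hI.trans <| Ideal.radical_le_radical_iff.mpr <| Ideal.span_le.mpr fun r hr ↦
    mem_nilradical.mpr (hs r hr)

theorem ringKrullDim_nonpos_of_maximalIdeal_le_nilradical {R : Type*} [CommRing R]
    [IsLocalRing R] (h : maximalIdeal R ≤ nilradical R) : ringKrullDim R ≤ 0 := by
  have : (nilradical R).IsMaximal :=
    le_antisymm (nilradical_le_prime _) h ▸ maximalIdeal.isMaximal R
  exact_mod_cast Ring.krullDimLE_iff.mp (Ring.KrullDimLE.of_isMaximal_nilradical R)

namespace IsRingPerfection

variable {p : ℕ} {R₀ R : Type} [CommRing R₀] [CommRing R] {g : R₀ →+* R}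

theorem ne_zero [Nontrivial R] (hg : IsRingPerfection p g) : p ≠ 0 := by
  rintro rfl
  exact zero_ne_one (hg.perfect.1 (by simp : (0 : R) ^ 0 = (1 : R) ^ 0))

theorem isNilpotent_of_isNilpotent_map (hg : IsRingPerfection p g) {y : R₀}
    (hy : IsNilpotent (g y)) : IsNilpotent y := by
  obtain ⟨n, hn⟩ := hy
  obtain ⟨k, hk⟩ := (hg.ker (y ^ n)).mp (by rw [map_pow, hn])
  exact ⟨n * p ^ k, by rw [pow_mul, hk]⟩

theorem isLocalHom [Nontrivial R] (hg : IsRingPerfection p g) : IsLocalHom g := by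
  refine ⟨fun y hy ↦ ?_⟩
  obtain ⟨z, hz⟩ := isUnit_iff_exists_inv.mp hy
  obtain ⟨k, w, hw⟩ := hg.colim z
  have hnil : IsNilpotent (y ^ p ^ k * w - 1) := hg.isNilpotent_of_isNilpotent_map <| by
    rw [map_sub, map_mul, map_pow, ← hw, ← mul_pow, hz, one_pow, map_one, sub_self]
    exact IsNilpotent.zero
  have hunit : IsUnit (y ^ p ^ k * w) := by simpa using hnil.isUnit_add_one
  exact (isUnit_pow_iff (pow_ne_zero k hg.ne_zero)).mp (isUnit_of_mul_isUnit_left hunit)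

theorem maximalIdeal_le_nilradical [IsLocalRing R₀] [IsLocalRing R] (hg : IsRingPerfection p g)
    (h : maximalIdeal R ≤ nilradical R) : maximalIdeal R₀ ≤ nilradical R₀ := by
  have := hg.isLocalHom
  exact fun y hy ↦ hg.isNilpotent_of_isNilpotent_map (h (map_nonunit g y hy))

end IsRingPerfection

open IsLocalRing in
theorem no_frobenius_fixed_point_in_top_localCohomology_general
    {p : ℕ} {R₀ R : Type} [CommRing R₀] [CommRing R]
    [IsLocalRing R₀] [IsLocalRing R]
    (g : R₀ →+* R) (hg : IsRingPerfection p g)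
    (d : ℕ) (hd : 0 < d) (hdim : ringKrullDim R₀ = d)
    {H : Type} [AddCommGroup H] [Module R H] (F : FrobMod p R H)
    (hsimple : F.IsSimpleMod)
    (hfaithful : ∀ r : R, (∀ x : H, r • x = 0) → r = 0)
    (hparam : ∃ s : Finset R, (↑s : Set R) ⊆ (maximalIdeal R : Set R) ∧
      maximalIdeal R ≤ (Ideal.span (↑s : Set R)).radical ∧
      ∀ x : H, ∃ n : ℕ, ∀ r ∈ s, r ^ n • x = 0) :
    ¬ ∃ x : H, x ≠ 0 ∧ F.φ x = x := by
  rintro ⟨x, hx0, hfix⟩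
  obtain ⟨s, -, hm_rad, hs_ann⟩ := hparam
  obtain ⟨n, hn⟩ := hs_ann x
  have htop : R ∙ x = ⊤ := hsimple.span_singleton_eq_top_of_fixed hx0 hfix
  have hs_nil : ∀ r ∈ (s : Set R), IsNilpotent r := fun r hr ↦
    ⟨n, hfaithful _ (smul_eq_zero_of_span_singleton_eq_top htop (hn r hr))⟩
  have hm_nil : maximalIdeal R₀ ≤ nilradical R₀ :=
    hg.maximalIdeal_le_nilradical (le_nilradical_of_le_radical_span hs_nil hm_rad)
  have hdim_nonpos := ringKrullDim_nonpos_of_maximalIdeal_le_nilradical hm_nil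
  rw [hdim] at hdim_nonpos
  exact hd.not_ge (by exact_mod_cast hdim_nonpos)

open IsLocalRing in
/-- Let `(R, m)` be the perfection of a noetherian local `𝔽_p`-algebra
with `d = dim R > 0`. If `H = H^d_m(R)` is a simple `R[φ]`-module with trivial annihilator
(and, as always, every element of `H` is annihilated by powers of a system of parameters
generating `m` up to radical), then there is no nonzero `x ∈ H` with `φ(x) = x`. -/
theorem no_frobenius_fixed_point_in_top_localCohomology
    {p : ℕ} [Fact p.Prime] {R₀ R : Type} [CommRing R₀] [CommRing R]
    [CharP R₀ p] [CharP R p] [IsNoetherianRing R₀] [IsLocalRing R₀] [IsLocalRing R]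
    (g : R₀ →+* R) (hg : IsRingPerfection p g)
    (d : ℕ) (hd : 0 < d) (hdim : ringKrullDim R₀ = d)
    {H : Type} [AddCommGroup H] [Module R H] (F : FrobMod p R H)
    (hsimple : F.IsSimpleMod)
    (hfaithful : ∀ r : R, (∀ x : H, r • x = 0) → r = 0)
    (hparam : ∃ s : Finset R, (↑s : Set R) ⊆ (maximalIdeal R : Set R) ∧
      maximalIdeal R ≤ (Ideal.span (↑s : Set R)).radical ∧
      ∀ x : H, ∃ n : ℕ, ∀ r ∈ s, r ^ n • x = 0) :
    ¬ ∃ x : H, x ≠ 0 ∧ F.φ x = x :=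
  no_frobenius_fixed_point_in_top_localCohomology_general g hg d hd hdim F hsimple hfaithful hparam
end
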